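/- If ρ : ℝ≥0 → ℝ≥0 is C¹ and satisfies K⁻¹(Q+k)^q ≤ ρ(Q) + 2Q ρ'(Q) ≤ K(Q+k)^q for all Q ≥ 0, with K ≥ 1, k ≥ 0, q ≥ 0, then there exists a constant K' > 0 such that ρ(Q) ≥ K'⁻¹ (Q+k)^q for all Q ≥ 0. -/

import Mathlib

/-!
Since `ρ + 2Qρ' = 2√Q (√Q ρ)'`, a lower bound on `ρ + 2Qρ'` is a lower bound on the derivative of
`√Q ρ`, which vanishes at `0`. The comparison function `σ(Q) = c (Q + k)^q` satisfies
`σ + 2Qσ' ≤ (1 + 2q) σ`, so with `c = (K (1 + 2q))⁻¹` the condition [U] gives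
`σ + 2Qσ' ≤ ρ + 2Qρ'`, and integrating yields `σ ≤ ρ`, i.e. `K' = K (1 + 2q)`.
-/

open Real Set

theorem hasDerivAt_sqrt_mul {f : ℝ → ℝ} {f' t : ℝ} (hf : HasDerivAt f f' t) (ht : 0 < t) :
    HasDerivAt (fun s => √s * f s) ((f t + 2 * t * f') / (2 * √t)) t := by
  refine ((hasDerivAt_sqrt ht.ne').mul hf).congr_deriv ?_
  have hst : √t ≠ 0 := (sqrt_pos.2 ht).ne'
  field_simp
  rw [sq_sqrt ht.le]
  ring

theorem le_of_add_two_mul_deriv_le {ρ σ ρ' σ' : ℝ → ℝ}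
    (hρ : ContinuousOn ρ (Ici 0)) (hσ : ContinuousOn σ (Ici 0))
    (hρ' : ∀ t, 0 < t → HasDerivAt ρ (ρ' t) t) (hσ' : ∀ t, 0 < t → HasDerivAt σ (σ' t) t)
    (h : ∀ t, 0 ≤ t → σ t + 2 * t * σ' t ≤ ρ t + 2 * t * ρ' t) {Q : ℝ} (hQ : 0 ≤ Q) :
    σ Q ≤ ρ Q := by
  rcases hQ.eq_or_lt with rfl | hQ
  · simpa using h 0 le_rfl
  have hmono : MonotoneOn (fun t => √t * (ρ t - σ t)) (Ici 0) := by
    refine monotoneOn_of_hasDerivWithinAt_nonneg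
      (f' := fun t => (ρ t - σ t + 2 * t * (ρ' t - σ' t)) / (2 * √t)) (convex_Ici 0)
      (continuous_sqrt.continuousOn.mul (hρ.sub hσ)) (fun t ht => ?_) (fun t ht => ?_)
    · rw [interior_Ici] at ht
      exact (hasDerivAt_sqrt_mul ((hρ' t ht).sub (hσ' t ht)) ht).hasDerivWithinAt
    · rw [interior_Ici] at ht
      have := h t ht.le
      exact div_nonneg (by linarith) (by positivity)
  have h0Q : 0 ≤ √Q * (ρ Q - σ Q) := by
    simpa using hmono self_mem_Ici hQ.le hQ.le
  exact sub_nonneg.1 (nonneg_of_mul_nonneg_right h0Q (sqrt_pos.2 hQ))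

theorem mul_rpow_sub_one_le_rpow {s t : ℝ} (q : ℝ) (ht : 0 ≤ t) (hts : t ≤ s) :
    t * s ^ (q - 1) ≤ s ^ q := by
  rcases (ht.trans hts).eq_or_lt with rfl | hs
  · obtain rfl : t = 0 := le_antisymm hts ht
    simpa using rpow_nonneg le_rfl q
  rw [rpow_sub_one hs.ne', mul_div_assoc', div_le_iff₀ hs, mul_comm]
  exact mul_le_mul_of_nonneg_left hts (rpow_nonneg hs.le q)

theorem nonlinear_hodge_rho_lower_bound_general
    (ρ ρd : ℝ → ℝ) (K k q : ℝ)
    (hK : 1 ≤ K) (hk : 0 ≤ k) (hq : 0 ≤ q)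
    (hderiv : ∀ Q : ℝ, 0 ≤ Q → HasDerivAt ρ (ρd Q) Q)
    (hUlow : ∀ Q : ℝ, 0 ≤ Q → K⁻¹ * (Q + k) ^ q ≤ ρ Q + 2 * Q * ρd Q) :
    ∃ K' : ℝ, 0 < K' ∧ ∀ Q : ℝ, 0 ≤ Q → K'⁻¹ * (Q + k) ^ q ≤ ρ Q := by
  have hK0 : 0 < K := zero_lt_one.trans_le hK
  set c := (K * (1 + 2 * q))⁻¹ with hc
  refine ⟨K * (1 + 2 * q), by positivity, fun Q hQ => ?_⟩
  refine le_of_add_two_mul_deriv_le (σ := fun t => c * (t + k) ^ q)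
    (σ' := fun t => c * (q * (t + k) ^ (q - 1)))
    (fun t ht => (hderiv t ht).continuousAt.continuousWithinAt)
    (continuous_const.mul ((continuous_add_const k).rpow_const fun _ => Or.inr hq)).continuousOn
    (fun t ht => hderiv t ht.le) (fun t ht => ?_) (fun t ht => ?_) hQ
  · simpa using
      (((hasDerivAt_id t).add_const k).rpow_const (p := q) (Or.inl (by positivity))).const_mul c
  · calc c * (t + k) ^ q + 2 * t * (c * (q * (t + k) ^ (q - 1)))
        = c * ((t + k) ^ q + 2 * t * (q * (t + k) ^ (q - 1))) := by ring
      _ ≤ c * ((1 + 2 * q) * (t + k) ^ q) := by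
        have := mul_rpow_sub_one_le_rpow q ht (le_add_of_nonneg_right hk)
        gcongr
        nlinarith
      _ = K⁻¹ * (t + k) ^ q := by rw [hc, mul_inv, mul_assoc, inv_mul_cancel_left₀ (by positivity)]
      _ ≤ ρ t + 2 * t * ρd t := hUlow t ht

/-- Under condition [U], there is `K' > 0` with
`ρ(Q) ≥ K'⁻¹ (Q+k)^q` for all `Q ≥ 0`. -/
theorem nonlinear_hodge_rho_lower_bound
    (ρ ρd : ℝ → ℝ) (K k q : ℝ)
    (hK : 1 ≤ K) (hk : 0 ≤ k) (hq : 0 ≤ q)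
    (hderiv : ∀ Q : ℝ, 0 ≤ Q → HasDerivAt ρ (ρd Q) Q)
    (hcont : ContinuousOn ρd (Set.Ici (0 : ℝ)))
    (hpos : ∀ Q : ℝ, 0 ≤ Q → 0 < ρ Q)
    (hUlow : ∀ Q : ℝ, 0 ≤ Q → K⁻¹ * (Q + k) ^ q ≤ ρ Q + 2 * Q * ρd Q)
    (hUupp : ∀ Q : ℝ, 0 ≤ Q → ρ Q + 2 * Q * ρd Q ≤ K * (Q + k) ^ q) :
    ∃ K' : ℝ, 0 < K' ∧ ∀ Q : ℝ, 0 ≤ Q → K'⁻¹ * (Q + k) ^ q ≤ ρ Q :=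
  nonlinear_hodge_rho_lower_bound_general ρ ρd K k q hK hk hq hderiv hUlow
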